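/- arXiv:2411.03611 — 2 statements merged into one kernel-verified Lean document; each statement's English description precedes it below -/
import Mathlib

section
/- (Duality formula) For a reference finite measure γ on ℝ^d and a probability measure μ, the functional E(μ) = ∫ φ(dμ/dγ) dγ satisfies E(μ) = sup over bounded continuous S*: ℝ^d → ℝ of { ∫ S* dμ − ∫ φ*(S*) dγ }, where φ* is the Legendre conjugate of φ. -/
open Set MeasureTheory BoundedContinuousFunction Filter Topology

/-!
By the Fenchel–Young inequality `s * y - φ* y ≤ φ s` (with `φ* = legendreConj φ`), every bounded
continuous `S*` gives a value below `∫ φ(u) dγ`, because `∫ S* dμ = ∫ u S* dγ`.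

For the converse, `φ` is its own biconjugate on `[0, ∞)`: at `s > 0` any subgradient `y` of `φ`
at `s` attains `φ s = s * y - φ* y`, and at `s = 0` lower semicontinuity makes `φ* y` close to
`-φ 0` for suitable very negative `y`. As `φ*` is convex, hence continuous, the supremum over `y`
may be taken over a dense sequence `c n`. Choosing at each `x` the best of `c 0, …, c n` for
`s = u x` yields bounded measurable `Yₙ` whose integrands `u Yₙ - φ*(Yₙ)` increase to `φ(u)`, so
by monotone convergence their values tend to `∫ φ(u) dγ`. Finally, each `Yₙ` is replaced by a
bounded continuous function close to it in `L¹`; since `φ*` is Lipschitz on bounded sets, this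
changes the value only slightly.
-/

theorem ConvexOn.exists_forall_add_mul_sub_le {S : Set ℝ} {f : ℝ → ℝ} (hf : ConvexOn ℝ S f)
    {x : ℝ} (hx : x ∈ interior S) : ∃ c, ∀ t ∈ S, f x + c * (t - x) ≤ f t := by
  refine ⟨derivWithin f (Ioi x) x, fun t ht => ?_⟩
  rcases lt_trichotomy t x with htx | rfl | hxt
  · have hslope := hf.slope_le_leftDeriv_of_mem_interior ht hx htx
    rw [slope_def_field, div_le_iff₀ (sub_pos.2 htx)] at hslope
    nlinarith [hf.leftDeriv_le_rightDeriv_of_mem_interior hx]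
  · simp
  · have hslope := hf.rightDeriv_le_slope_of_mem_interior hx ht hxt
    rw [slope_def_field, le_div_iff₀ (sub_pos.2 hxt)] at hslope
    linarith

-- A real `⨆` of an unbounded family is `0`; for superlinear `φ` this never happens
-- (`legendreConj.bddAbove_range`).
noncomputable def legendreConj (φ : ℝ → ℝ) (y : ℝ) : ℝ :=
  ⨆ s : Ici (0 : ℝ), ((s : ℝ) * y - φ s)

namespace legendreConj

variable {φ : ℝ → ℝ}

theorem le_of_forall_mul_sub_le {y c : ℝ} (h : ∀ s, 0 ≤ s → s * y - φ s ≤ c) :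
    legendreConj φ y ≤ c :=
  have : Nonempty (Ici (0 : ℝ)) := nonempty_Ici.to_subtype
  ciSup_le fun s => h s s.2

theorem bddAbove_range (hφnn : ∀ s ∈ Ici (0 : ℝ), 0 ≤ φ s)
    (hφsuper : Tendsto (fun s => φ s / s) atTop atTop) (y : ℝ) :
    BddAbove (range fun s : Ici (0 : ℝ) => (s : ℝ) * y - φ s) := by
  obtain ⟨R, hR⟩ := (hφsuper.eventually_ge_atTop |y|).exists_forall_of_atTop
  refine ⟨max R 1 * |y|, ?_⟩
  rintro _ ⟨⟨s, hs : 0 ≤ s⟩, rfl⟩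
  dsimp only
  have hsy : s * y ≤ s * |y| := mul_le_mul_of_nonneg_left (le_abs_self y) hs
  rcases le_total s (max R 1) with hsR | hRs
  · nlinarith [hφnn s hs, abs_nonneg y]
  · have hs1 : 0 < s := one_pos.trans_le ((le_max_right R 1).trans hRs)
    have := (le_div_iff₀ hs1).1 (hR s ((le_max_left R 1).trans hRs))
    nlinarith [mul_nonneg (zero_le_one.trans (le_max_right R 1)) (abs_nonneg y)]

theorem mul_sub_le (hφnn : ∀ s ∈ Ici (0 : ℝ), 0 ≤ φ s)
    (hφsuper : Tendsto (fun s => φ s / s) atTop atTop) {s : ℝ} (hs : 0 ≤ s) (y : ℝ) :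
    s * y - φ s ≤ legendreConj φ y :=
  le_ciSup (bddAbove_range hφnn hφsuper y) ⟨s, hs⟩

theorem convexOn (hφnn : ∀ s ∈ Ici (0 : ℝ), 0 ≤ φ s)
    (hφsuper : Tendsto (fun s => φ s / s) atTop atTop) : ConvexOn ℝ univ (legendreConj φ) := by
  refine ⟨convex_univ, fun y₁ _ y₂ _ a b ha hb hab => le_of_forall_mul_sub_le fun s hs => ?_⟩
  have h₁ := mul_le_mul_of_nonneg_left (mul_sub_le hφnn hφsuper hs y₁) ha
  have h₂ := mul_le_mul_of_nonneg_left (mul_sub_le hφnn hφsuper hs y₂) hb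
  simp only [smul_eq_mul]
  linear_combination h₁ + h₂ + φ s * hab

theorem continuous (hφnn : ∀ s ∈ Ici (0 : ℝ), 0 ≤ φ s)
    (hφsuper : Tendsto (fun s => φ s / s) atTop atTop) : Continuous (legendreConj φ) :=
  (convexOn hφnn hφsuper).locallyLipschitz.continuous

theorem exists_le_sub_apply_zero (hφnn : ∀ s ∈ Ici (0 : ℝ), 0 ≤ φ s)
    (hφlsc : LowerSemicontinuousOn φ (Ici 0)) {ε : ℝ} (hε : 0 < ε) :
    ∃ y, legendreConj φ y ≤ ε - φ 0 := by
  obtain ⟨δ, hδ, hδφ⟩ := mem_nhdsGE_iff_exists_Ico_subset.1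
    (hφlsc 0 self_mem_Ici (φ 0 - ε) (by linarith))
  have hy : -φ 0 / δ ≤ 0 :=
    div_nonpos_of_nonpos_of_nonneg (neg_nonpos.2 (hφnn 0 self_mem_Ici)) hδ.le
  refine ⟨-φ 0 / δ, le_of_forall_mul_sub_le fun t ht => ?_⟩
  rcases lt_or_ge t δ with htδ | hδt
  · have : φ 0 - ε < φ t := hδφ ⟨ht, htδ⟩
    nlinarith
  · have : t * (-φ 0 / δ) ≤ δ * (-φ 0 / δ) := mul_le_mul_of_nonpos_right hδt hy
    rw [mul_div_cancel₀ _ hδ.ne'] at this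
    linarith [hφnn t ht]

theorem exists_le_mul_sub (hφnn : ∀ s ∈ Ici (0 : ℝ), 0 ≤ φ s) (hφconv : ConvexOn ℝ (Ici 0) φ)
    (hφlsc : LowerSemicontinuousOn φ (Ici 0)) {s : ℝ} (hs : 0 ≤ s) {ε : ℝ} (hε : 0 < ε) :
    ∃ y, φ s - ε ≤ s * y - legendreConj φ y := by
  rcases hs.eq_or_lt with rfl | hs
  · obtain ⟨y, hy⟩ := exists_le_sub_apply_zero hφnn hφlsc hε
    exact ⟨y, by linarith⟩
  · obtain ⟨c, hc⟩ := hφconv.exists_forall_add_mul_sub_le (x := s) (by rwa [interior_Ici])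
    refine ⟨c, ?_⟩
    have : legendreConj φ c ≤ s * c - φ s :=
      le_of_forall_mul_sub_le fun t ht => by linarith [hc t ht]
    linarith

theorem exists_lt_mul_sub_of_denseRange (hφnn : ∀ s ∈ Ici (0 : ℝ), 0 ≤ φ s)
    (hφsuper : Tendsto (fun s => φ s / s) atTop atTop) (hφconv : ConvexOn ℝ (Ici 0) φ)
    (hφlsc : LowerSemicontinuousOn φ (Ici 0)) {c : ℕ → ℝ} (hc : DenseRange c) {s : ℝ}
    (hs : 0 ≤ s) {ε : ℝ} (hε : 0 < ε) : ∃ n, φ s - ε < s * c n - legendreConj φ (c n) := by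
  obtain ⟨y, hy⟩ := exists_le_mul_sub hφnn hφconv hφlsc hs (half_pos hε)
  have hopen : IsOpen {y | φ s - ε < s * y - legendreConj φ y} :=
    isOpen_lt continuous_const ((continuous_const.mul continuous_id).sub (continuous hφnn hφsuper))
  exact hc.exists_mem_open hopen ⟨y, (by linarith : φ s - ε < s * y - legendreConj φ y)⟩

end legendreConj

section runningArgmax

variable {X : Type*}

noncomputable def runningArgmax (F : X → ℝ → ℝ) (c : ℕ → ℝ) : ℕ → X → ℝ
  | 0 => fun _ => c 0
  | n + 1 => fun x =>
    if F x (c (n + 1)) ≤ F x (runningArgmax F c n x) then runningArgmax F c n x else c (n + 1)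

variable (F : X → ℝ → ℝ) (c : ℕ → ℝ)

theorem monotone_runningArgmax (x : X) : Monotone fun n => F x (runningArgmax F c n x) := by
  refine monotone_nat_of_le_succ fun n => ?_
  simp only [runningArgmax]
  split_ifs with h
  · exact le_rfl
  · exact (not_le.1 h).le

theorem le_runningArgmax (n : ℕ) (x : X) : F x (c n) ≤ F x (runningArgmax F c n x) := by
  cases n with
  | zero => exact le_rfl
  | succ n =>
    simp only [runningArgmax]
    split_ifs with h
    · exact h
    · exact le_rfl

theorem exists_abs_runningArgmax_le (n : ℕ) : ∃ M, ∀ x, |runningArgmax F c n x| ≤ M := by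
  induction n with
  | zero => exact ⟨|c 0|, fun _ => le_rfl⟩
  | succ n ih =>
    obtain ⟨M, hM⟩ := ih
    refine ⟨max M |c (n + 1)|, fun x => ?_⟩
    simp only [runningArgmax]
    split_ifs
    · exact (hM x).trans (le_max_left _ _)
    · exact le_max_right _ _

theorem measurable_runningArgmax [MeasurableSpace X] (hF : Measurable (Function.uncurry F))
    (n : ℕ) : Measurable (runningArgmax F c n) := by
  induction n with
  | zero => exact measurable_const
  | succ n ih =>
    have hcomp : ∀ {g : X → ℝ}, Measurable g → Measurable fun x => F x (g x) :=
      fun hg => hF.comp (measurable_id.prodMk hg)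
    exact Measurable.ite (measurableSet_le (hcomp measurable_const) (hcomp ih)) ih
      measurable_const

end runningArgmax

section Integrable

variable {X : Type*} [MeasurableSpace X] {γ : Measure X} {u f : X → ℝ} {M : ℝ}

theorem Measurable.integrable_of_abs_le [IsFiniteMeasure γ] (hf : Measurable f)
    (hfM : ∀ x, |f x| ≤ M) : Integrable f γ :=
  .of_bound hf.aestronglyMeasurable M (ae_of_all _ fun x => (Real.norm_eq_abs _).trans_le (hfM x))

theorem Continuous.integrable_comp_of_abs_le [IsFiniteMeasure γ] {g : ℝ → ℝ} (hg : Continuous g)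
    (hf : Measurable f) (hfM : ∀ x, |f x| ≤ M) : Integrable (fun x => g (f x)) γ := by
  obtain ⟨C, hC⟩ := (isCompact_Icc (a := -M) (b := M)).exists_bound_of_continuousOn hg.continuousOn
  exact .of_bound (hg.measurable.comp hf).aestronglyMeasurable C
    (ae_of_all _ fun x => hC _ (abs_le.1 (hfM x)))

theorem integrable_of_isFiniteMeasure_withDensity_ofReal (hu : Measurable u)
    (hunn : ∀ x, 0 ≤ u x) [IsFiniteMeasure (γ.withDensity fun x => ENNReal.ofReal (u x))] :
    Integrable u γ := by
  refine ⟨hu.aestronglyMeasurable, ?_⟩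
  rw [hasFiniteIntegral_iff_ofReal (ae_of_all _ hunn), ← setLIntegral_univ,
    ← withDensity_apply _ MeasurableSet.univ]
  exact measure_lt_top _ _

theorem integral_withDensity_ofReal (hu : Measurable u) (hunn : ∀ x, 0 ≤ u x) (f : X → ℝ) :
    ∫ x, f x ∂γ.withDensity (fun x => ENNReal.ofReal (u x)) = ∫ x, u x * f x ∂γ := by
  rw [integral_withDensity_eq_integral_toReal_smul hu.ennreal_ofReal
    (ae_of_all _ fun _ => ENNReal.ofReal_lt_top)]
  simp only [ENNReal.toReal_ofReal (hunn _), smul_eq_mul]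

theorem MeasureTheory.Integrable.mul_of_abs_le (hu : Integrable u γ) (hf : Measurable f)
    (hfM : ∀ x, |f x| ≤ M) : Integrable (fun x => u x * f x) γ :=
  hu.mul_bdd hf.aestronglyMeasurable (ae_of_all _ fun x => (Real.norm_eq_abs _).trans_le (hfM x))

theorem integral_mul_sub_legendreConj_le [IsFiniteMeasure γ] {φ : ℝ → ℝ}
    (hφnn : ∀ s ∈ Ici (0 : ℝ), 0 ≤ φ s) (hφsuper : Tendsto (fun s => φ s / s) atTop atTop)
    (hunn : ∀ x, 0 ≤ u x) (hu : Integrable u γ) (hE : Integrable (fun x => φ (u x)) γ)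
    (hf : Measurable f) (hfM : ∀ x, |f x| ≤ M) :
    ∫ x, (u x * f x - legendreConj φ (f x)) ∂γ ≤ ∫ x, φ (u x) ∂γ :=
  integral_mono ((hu.mul_of_abs_le hf hfM).sub
    ((legendreConj.continuous hφnn hφsuper).integrable_comp_of_abs_le hf hfM)) hE
    fun x => by linarith [legendreConj.mul_sub_le hφnn hφsuper (hunn x) (f x)]

end Integrable

theorem exists_boundedContinuous_abs_le_integral_abs_sub_le {X : Type*} [PseudoMetricSpace X]
    [MeasurableSpace X] [BorelSpace X] (ν : Measure X) [IsFiniteMeasure ν] {f : X → ℝ} {M : ℝ}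
    (hf : Measurable f) (hfM : ∀ x, |f x| ≤ M) {ε : ℝ} (hε : 0 < ε) :
    ∃ S : X →ᵇ ℝ, (∀ x, |S x| ≤ M) ∧ ∫ x, |f x - S x| ∂ν ≤ ε := by
  have hfi : Integrable f ν := hf.integrable_of_abs_le hfM
  obtain ⟨g, hg, -⟩ := hfi.exists_boundedContinuous_integral_sub_le hε
  set clamp : ℝ → ℝ := fun t => max (-M) (min M t)
  have hclamp : LipschitzWith 1 clamp := (LipschitzWith.id.const_min M).const_max (-M)
  have hclamp_f : ∀ x, clamp (f x) = f x := fun x => by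
    obtain ⟨h₁, h₂⟩ := abs_le.1 (hfM x)
    simp only [clamp, min_eq_right h₂, max_eq_right h₁]
  refine ⟨g.comp clamp hclamp, fun x => abs_le.2 ⟨le_max_left _ _, max_le ?_ (min_le_left _ _)⟩,
    le_trans (integral_mono ?_ ?_ fun x => ?_) hg⟩
  · linarith [abs_nonneg (f x), hfM x]
  · exact (hfi.sub ((g.comp clamp hclamp).integrable ν)).abs
  · exact (hfi.sub (g.integrable ν)).norm
  · have := hclamp.dist_le_mul (f x) (g x)
    simp only [Real.dist_eq, NNReal.coe_one, one_mul, hclamp_f] at this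
    simpa [Real.norm_eq_abs] using this

theorem exists_boundedContinuous_integral_sub_integral_comp_ge {X : Type*} [PseudoMetricSpace X]
    [MeasurableSpace X] [BorelSpace X] (μ γ : Measure X) [IsFiniteMeasure μ] [IsFiniteMeasure γ]
    {g : ℝ → ℝ} (hg : LocallyLipschitz g) {f : X → ℝ} {M : ℝ} (hf : Measurable f)
    (hfM : ∀ x, |f x| ≤ M) {ε : ℝ} (hε : 0 < ε) :
    ∃ S : X →ᵇ ℝ, ∫ x, f x ∂μ - ∫ x, g (f x) ∂γ ≤ ∫ x, S x ∂μ - ∫ x, g (S x) ∂γ + ε := by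
  obtain ⟨K, hK⟩ :=
    hg.locallyLipschitzOn.exists_lipschitzOnWith_of_compact (isCompact_Icc (a := -M) (b := M))
  -- approximating in `L¹(μ + K • γ)` controls the error of both integrals at once
  obtain ⟨S, hSM, hS⟩ := exists_boundedContinuous_abs_le_integral_abs_sub_le (μ + K • γ) hf hfM hε
  refine ⟨S, ?_⟩
  have hSm : Measurable S := S.continuous.measurable
  have hgS : ∀ x, g (S x) - g (f x) ≤ K * |f x - S x| := fun x => by
    have := hK.dist_le_mul _ (abs_le.1 (hSM x)) _ (abs_le.1 (hfM x))
    rw [Real.dist_eq, Real.dist_eq, abs_sub_comm (S x)] at this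
    exact (le_abs_self _).trans this
  have hdiff : ∀ (ν : Measure X) [IsFiniteMeasure ν], Integrable (fun x => |f x - S x|) ν :=
    fun ν _ => ((hf.integrable_of_abs_le hfM).sub (S.integrable ν)).abs
  have hsplit : ∫ x, |f x - S x| ∂(μ + K • γ) = ∫ x, |f x - S x| ∂μ + K * ∫ x, |f x - S x| ∂γ := by
    rw [integral_add_measure (hdiff μ) ((hdiff γ).smul_measure_nnreal),
      integral_smul_nnreal_measure, NNReal.smul_def, smul_eq_mul]
  have hμ : ∫ x, f x ∂μ - ∫ x, S x ∂μ ≤ ∫ x, |f x - S x| ∂μ := by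
    rw [← integral_sub (hf.integrable_of_abs_le hfM) (S.integrable μ)]
    exact integral_mono ((hf.integrable_of_abs_le hfM).sub (S.integrable μ)) (hdiff μ)
      fun x => le_abs_self _
  have hγ : ∫ x, g (S x) ∂γ - ∫ x, g (f x) ∂γ ≤ K * ∫ x, |f x - S x| ∂γ := by
    rw [← integral_sub (hg.continuous.integrable_comp_of_abs_le hSm hSM)
      (hg.continuous.integrable_comp_of_abs_le hf hfM), ← integral_const_mul]
    exact integral_mono ((hg.continuous.integrable_comp_of_abs_le hSm hSM).sub
      (hg.continuous.integrable_comp_of_abs_le hf hfM)) ((hdiff γ).const_mul _) hgS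
  linarith

theorem exists_tendsto_integral_mul_sub_legendreConj {X : Type*} [MeasurableSpace X]
    (γ : Measure X) [IsFiniteMeasure γ] {φ : ℝ → ℝ} (hφnn : ∀ s ∈ Ici (0 : ℝ), 0 ≤ φ s)
    (hφconv : ConvexOn ℝ (Ici 0) φ) (hφlsc : LowerSemicontinuousOn φ (Ici 0))
    (hφsuper : Tendsto (fun s => φ s / s) atTop atTop) {u : X → ℝ} (hu : Measurable u)
    (hunn : ∀ x, 0 ≤ u x) (hu_int : Integrable u γ) (hE : Integrable (fun x => φ (u x)) γ) :
    ∃ Y : ℕ → X → ℝ, (∀ n, Measurable (Y n) ∧ ∃ M, ∀ x, |Y n x| ≤ M) ∧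
      Tendsto (fun n => ∫ x, (u x * Y n x - legendreConj φ (Y n x)) ∂γ) atTop
        (𝓝 (∫ x, φ (u x) ∂γ)) := by
  have hcont := legendreConj.continuous hφnn hφsuper
  set F : X → ℝ → ℝ := fun x y => u x * y - legendreConj φ y
  have hF : Measurable (Function.uncurry F) :=
    ((hu.comp measurable_fst).mul measurable_snd).sub (hcont.measurable.comp measurable_snd)
  set c := TopologicalSpace.denseSeq ℝ
  have hY : ∀ n, Measurable (runningArgmax F c n) ∧ ∃ M, ∀ x, |runningArgmax F c n x| ≤ M :=
    fun n => ⟨measurable_runningArgmax F c hF n, exists_abs_runningArgmax_le F c n⟩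
  refine ⟨runningArgmax F c, hY, integral_tendsto_of_tendsto_of_monotone (fun n => ?_) hE
    (ae_of_all _ (monotone_runningArgmax F c)) (ae_of_all _ fun x => ?_)⟩
  · obtain ⟨hm, M, hM⟩ := hY n
    exact (hu_int.mul_of_abs_le hm hM).sub (hcont.integrable_comp_of_abs_le hm hM)
  · have hyoung : ∀ n, F x (runningArgmax F c n x) ≤ φ (u x) := fun n => by
      linarith [legendreConj.mul_sub_le hφnn hφsuper (hunn x) (runningArgmax F c n x)]
    refine tendsto_atTop_isLUB (monotone_runningArgmax F c x)
      ⟨forall_mem_range.2 hyoung, fun b hb => le_of_forall_pos_le_add fun ε hε => ?_⟩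
    obtain ⟨n, hn⟩ := legendreConj.exists_lt_mul_sub_of_denseRange hφnn hφsuper hφconv hφlsc
      (TopologicalSpace.denseRange_denseSeq ℝ) (hunn x) hε
    linarith [hb ⟨n, rfl⟩, le_runningArgmax F c n x]

theorem stmt12_general (d : ℕ)
    (γ : Measure (EuclideanSpace ℝ (Fin d))) [IsFiniteMeasure γ]
    (φ : ℝ → ℝ) (hφnn : ∀ s ∈ Ici (0:ℝ), 0 ≤ φ s)
    (hφconv : ConvexOn ℝ (Ici 0) φ) (hφlsc : LowerSemicontinuousOn φ (Ici 0))
    (hφsuper : Filter.Tendsto (fun s => φ s / s) Filter.atTop Filter.atTop)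
    (φstar : ℝ → ℝ)
    (hφstar : ∀ y : ℝ, φstar y = ⨆ s : Ici (0:ℝ), ((s : ℝ) * y - φ (s : ℝ)))
    (u : EuclideanSpace ℝ (Fin d) → ℝ) (hu : Measurable u) (hunn : ∀ x, 0 ≤ u x)
    (μ : Measure (EuclideanSpace ℝ (Fin d)))
    (hμ : μ = γ.withDensity (fun x => ENNReal.ofReal (u x)))
    (hprob : IsProbabilityMeasure μ)
    (hEfin : Integrable (fun x => φ (u x)) γ) :
    ∫ x, φ (u x) ∂γ =
      ⨆ S : EuclideanSpace ℝ (Fin d) →ᵇ ℝ,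
        (∫ x, S x ∂μ - ∫ x, φstar (S x) ∂γ) := by
  obtain rfl : φstar = legendreConj φ := funext hφstar
  have hu_int : Integrable u γ := by
    subst hμ
    exact integrable_of_isFiniteMeasure_withDensity_ofReal hu hunn
  have hcont := legendreConj.continuous hφnn hφsuper
  have hvalue : ∀ (f : EuclideanSpace ℝ (Fin d) → ℝ) (M : ℝ), Measurable f → (∀ x, |f x| ≤ M) →
      ∫ x, f x ∂μ - ∫ x, legendreConj φ (f x) ∂γ = ∫ x, (u x * f x - legendreConj φ (f x)) ∂γ :=
    fun f M hf hfM => by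
      rw [hμ, integral_withDensity_ofReal hu hunn,
        integral_sub (hu_int.mul_of_abs_le hf hfM) (hcont.integrable_comp_of_abs_le hf hfM)]
  have hweak : ∀ S : EuclideanSpace ℝ (Fin d) →ᵇ ℝ,
      ∫ x, S x ∂μ - ∫ x, legendreConj φ (S x) ∂γ ≤ ∫ x, φ (u x) ∂γ := fun S => by
    have hSm : Measurable S := S.continuous.measurable
    have hSM (x) : |S x| ≤ ‖S‖ := (Real.norm_eq_abs _).symm.trans_le (S.norm_coe_le_norm x)
    rw [hvalue S ‖S‖ hSm hSM]
    exact integral_mul_sub_legendreConj_le hφnn hφsuper hunn hu_int hEfin hSm hSM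
  refine le_antisymm ?_ (ciSup_le hweak)
  obtain ⟨Y, hY, hlim⟩ := exists_tendsto_integral_mul_sub_legendreConj γ hφnn hφconv hφlsc hφsuper
    hu hunn hu_int hEfin
  refine le_of_tendsto hlim (Eventually.of_forall fun n => ?_)
  obtain ⟨hYm, M, hYM⟩ := hY n
  rw [← hvalue _ M hYm hYM]
  refine le_of_forall_pos_le_add fun ε hε => ?_
  obtain ⟨S, hS⟩ := exists_boundedContinuous_integral_sub_integral_comp_ge μ γ
    (legendreConj.convexOn hφnn hφsuper).locallyLipschitz hYm hYM hε
  exact hS.trans ((add_le_add_iff_right ε).2 (le_ciSup ⟨_, forall_mem_range.2 hweak⟩ S))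

theorem stmt12 (d : ℕ)
    (γ : Measure (EuclideanSpace ℝ (Fin d))) [IsFiniteMeasure γ]
    (φ : ℝ → ℝ) (hφnn : ∀ s ∈ Ici (0:ℝ), 0 ≤ φ s)
    (hφconv : ConvexOn ℝ (Ici 0) φ) (hφlsc : LowerSemicontinuousOn φ (Ici 0))
    (hφ1 : φ 1 = 0)
    (hφsuper : Filter.Tendsto (fun s => φ s / s) Filter.atTop Filter.atTop)
    (φstar : ℝ → ℝ)
    (hφstar : ∀ y : ℝ, φstar y = ⨆ s : Ici (0:ℝ), ((s : ℝ) * y - φ (s : ℝ)))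
    (u : EuclideanSpace ℝ (Fin d) → ℝ) (hu : Measurable u) (hunn : ∀ x, 0 ≤ u x)
    (μ : Measure (EuclideanSpace ℝ (Fin d)))
    (hμ : μ = γ.withDensity (fun x => ENNReal.ofReal (u x)))
    (hprob : IsProbabilityMeasure μ)
    (hEfin : Integrable (fun x => φ (u x)) γ) :
    ∫ x, φ (u x) ∂γ =
      ⨆ S : EuclideanSpace ℝ (Fin d) →ᵇ ℝ,
        (∫ x, S x ∂μ - ∫ x, φstar (S x) ∂γ) :=
  stmt12_general d γ φ hφnn hφconv hφlsc hφsuper φstar hφstar u hu hunn μ hμ hprob hEfin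
end

section
/- The functional μ ↦ ∫ φ(dμ/dγ) dγ (with value +∞ if μ is not absolutely continuous w.r.t. γ) is lower semicontinuous with respect to narrow (weak) convergence of probability measures. -/
/-!
With `φ* s = sup_{t ≥ 0} (s t - φ t)`, which superlinearity makes finite, convex and hence
continuous, the functional has the dual representation `F ν = sup_f (∫ f dν - ∫ φ* ∘ f dγ)`
over bounded continuous `f`: a supremum of narrowly continuous functions of `ν`, hence lower
semicontinuous.

The bound `≤` is the Fenchel–Young inequality `f ρ - φ* f ≤ φ ρ` for `ρ = dν/dγ`. For `≥`
when `ν ≪ γ`, the envelopes `t ↦ max_{n ≤ N} (s_n t - φ* s_n)` over a dense sequence of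
slopes increase to `φ` (Fenchel–Moreau), a maximizing slope is a bounded measurable function
of `ρ`, and bounded measurable test functions are `(γ + ν)`-a.e. limits of uniformly bounded
continuous ones. When `ν` is not `≪ γ`, the test functions `n • 1_A` with `γ A = 0 < ν A`
make the supremum infinite.
-/
open Set MeasureTheory Filter ENNReal Topology BoundedContinuousFunction

/-- The convex conjugate `φ*` of the restriction of `φ` to `[0, ∞)`. The set is bounded above
when `φ` is nonnegative and superlinear; otherwise `sSup` returns the junk value `0`. -/
noncomputable def legendre (φ : ℝ → ℝ) (s : ℝ) : ℝ :=
  sSup ((fun t => s * t - φ t) '' Ici 0)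

section Legendre

variable {φ : ℝ → ℝ}

lemma bddAbove_legendre (hnn : ∀ t ∈ Ici (0:ℝ), 0 ≤ φ t)
    (hsuper : Tendsto (fun t => φ t / t) atTop atTop) (s : ℝ) :
    BddAbove ((fun t => s * t - φ t) '' Ici 0) := by
  obtain ⟨T, hT⟩ := (hsuper.eventually_ge_atTop |s|).exists_forall_of_atTop
  refine ⟨|s| * max T 1, ?_⟩
  rintro _ ⟨t, ht, rfl⟩
  have hst : s * t ≤ |s| * t := mul_le_mul_of_nonneg_right (le_abs_self s) ht
  have hφt := hnn t ht
  rcases le_total t (max T 1) with h | h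
  · nlinarith [abs_nonneg s]
  · have ht1 : 0 < t := one_pos.trans_le ((le_max_right T 1).trans h)
    have : |s| * t ≤ φ t := (le_div_iff₀ ht1).1 (hT t ((le_max_left T 1).trans h))
    nlinarith [abs_nonneg s, le_max_right T 1]

lemma mul_sub_le_legendre (hnn : ∀ t ∈ Ici (0:ℝ), 0 ≤ φ t)
    (hsuper : Tendsto (fun t => φ t / t) atTop atTop) (s : ℝ) {t : ℝ} (ht : t ∈ Ici 0) :
    s * t - φ t ≤ legendre φ s :=
  le_csSup (bddAbove_legendre hnn hsuper s) ⟨t, ht, rfl⟩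

lemma legendre_le {s C : ℝ} (h : ∀ t ∈ Ici (0:ℝ), s * t - φ t ≤ C) : legendre φ s ≤ C :=
  csSup_le ⟨_, 0, self_mem_Ici, rfl⟩ (by rintro _ ⟨t, ht, rfl⟩; exact h t ht)

lemma legendre_zero_nonpos (hnn : ∀ t ∈ Ici (0:ℝ), 0 ≤ φ t) : legendre φ 0 ≤ 0 :=
  legendre_le fun t ht => by linarith [hnn t ht]

lemma convexOn_legendre (hnn : ∀ t ∈ Ici (0:ℝ), 0 ≤ φ t)
    (hsuper : Tendsto (fun t => φ t / t) atTop atTop) : ConvexOn ℝ univ (legendre φ) := by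
  refine ⟨convex_univ, fun x _ y _ a b ha hb hab => legendre_le fun t ht => ?_⟩
  have hx := mul_le_mul_of_nonneg_left (mul_sub_le_legendre hnn hsuper x ht) ha
  have hy := mul_le_mul_of_nonneg_left (mul_sub_le_legendre hnn hsuper y ht) hb
  simp only [smul_eq_mul]
  linear_combination hx + hy + φ t * hab

lemma continuous_legendre (hnn : ∀ t ∈ Ici (0:ℝ), 0 ≤ φ t)
    (hsuper : Tendsto (fun t => φ t / t) atTop atTop) : Continuous (legendre φ) :=
  (convexOn_legendre hnn hsuper).locallyLipschitz.continuous

lemma exists_bound_legendre (hnn : ∀ t ∈ Ici (0:ℝ), 0 ≤ φ t)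
    (hsuper : Tendsto (fun t => φ t / t) atTop atTop) (K : ℝ) :
    ∃ C, ∀ s, |s| ≤ K → |legendre φ s| ≤ C := by
  obtain ⟨C, hC⟩ := isCompact_Icc.exists_bound_of_continuousOn
    (continuous_legendre hnn hsuper).continuousOn (s := Icc (-K) K)
  exact ⟨C, fun s hs => hC s (abs_le.1 hs)⟩

end Legendre

lemma ConvexOn.add_leftDeriv_mul_sub_le {S : Set ℝ} {f : ℝ → ℝ} (hf : ConvexOn ℝ S f) {x y : ℝ}
    (hx : x ∈ interior S) (hy : y ∈ S) : f x + derivWithin f (Iio x) x * (y - x) ≤ f y := by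
  rcases lt_trichotomy y x with hyx | rfl | hxy
  · have := hf.slope_le_leftDeriv_of_mem_interior hy hx hyx
    rw [slope_def_field, div_le_iff₀ (sub_pos.2 hyx)] at this
    linarith
  · simp
  · have := (hf.leftDeriv_le_rightDeriv_of_mem_interior hx).trans
      (hf.rightDeriv_le_slope_of_mem_interior hx hy hxy)
    rw [slope_def_field, le_div_iff₀ (sub_pos.2 hxy)] at this
    linarith

section Biconjugate

variable {φ : ℝ → ℝ}

lemma exists_affine_minorant_of_lt (hnn : ∀ t ∈ Ici (0:ℝ), 0 ≤ φ t) (hconv : ConvexOn ℝ (Ici 0) φ)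
    (hlsc : LowerSemicontinuousOn φ (Ici 0)) {t₀ c : ℝ} (ht₀ : t₀ ∈ Ici 0) (hc : c < φ t₀) :
    ∃ a b : ℝ, (∀ t ∈ Ici (0:ℝ), a * t + b ≤ φ t) ∧ c < a * t₀ + b := by
  rcases (mem_Ici.1 ht₀).eq_or_lt with rfl | ht₀
  -- no left derivative at `0`: lower semicontinuity gives a steep line through `(0, c')`
  · rcases lt_or_ge c 0 with hc0 | hc0
    · exact ⟨0, 0, fun t ht => by simpa using hnn t ht, by simpa using hc0⟩
    obtain ⟨c', hcc', hc'⟩ := exists_between hc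
    obtain ⟨δ, hδ, hsub⟩ := mem_nhdsGE_iff_exists_Ico_subset.1 (hlsc 0 self_mem_Ici c' hc')
    refine ⟨-c' / δ, c', fun t ht => ?_, by simpa using hcc'⟩
    rcases lt_or_ge t δ with htδ | htδ
    · have : -c' / δ * t ≤ 0 :=
        mul_nonpos_of_nonpos_of_nonneg (div_nonpos_of_nonpos_of_nonneg (by linarith) hδ.le) ht
      have hφt : c' < φ t := hsub ⟨ht, htδ⟩
      linarith
    · have : c' ≤ c' / δ * t := by
        rw [div_mul_eq_mul_div, le_div_iff₀ hδ]
        nlinarith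
      have : -c' / δ * t = -(c' / δ * t) := by ring
      linarith [hnn t ht]
  · have hint : t₀ ∈ interior (Ici (0:ℝ)) := by rwa [interior_Ici]
    refine ⟨derivWithin φ (Iio t₀) t₀, φ t₀ - derivWithin φ (Iio t₀) t₀ * t₀,
      fun t ht => ?_, by linarith⟩
    linarith [hconv.add_leftDeriv_mul_sub_le hint ht]

lemma exists_lt_mul_sub_legendre (hnn : ∀ t ∈ Ici (0:ℝ), 0 ≤ φ t)
    (hconv : ConvexOn ℝ (Ici 0) φ) (hlsc : LowerSemicontinuousOn φ (Ici 0)) {t c : ℝ}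
    (ht : t ∈ Ici 0) (hc : c < φ t) : ∃ s, c < s * t - legendre φ s := by
  obtain ⟨a, b, hab, hc⟩ := exists_affine_minorant_of_lt hnn hconv hlsc ht hc
  have : legendre φ a ≤ -b := legendre_le fun u hu => by linarith [hab u hu]
  exact ⟨a, by linarith⟩

lemma exists_dense_slopes (hnn : ∀ t ∈ Ici (0:ℝ), 0 ≤ φ t) (hconv : ConvexOn ℝ (Ici 0) φ)
    (hlsc : LowerSemicontinuousOn φ (Ici 0)) (hsuper : Tendsto (fun t => φ t / t) atTop atTop) :
    ∃ s : ℕ → ℝ, s 0 = 0 ∧ ∀ t ∈ Ici (0:ℝ), ∀ c < φ t, ∃ n, c < s n * t - legendre φ (s n) := by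
  obtain ⟨v, hv⟩ := TopologicalSpace.exists_dense_seq ℝ
  refine ⟨fun | 0 => 0 | n + 1 => v n, rfl, fun t ht c hc => ?_⟩
  have hopen : IsOpen {s | c < s * t - legendre φ s} :=
    isOpen_lt continuous_const
      ((continuous_id.mul continuous_const).sub (continuous_legendre hnn hsuper))
  obtain ⟨n, hn⟩ := hv.exists_mem_open hopen (exists_lt_mul_sub_legendre hnn hconv hlsc ht hc)
  exact ⟨n + 1, hn⟩

end Biconjugate

lemma exists_measurable_argmax {α : Type*} [MeasurableSpace α] {u : ℕ → α → ℝ}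
    (hu : ∀ n, Measurable (u n)) (N : ℕ) :
    ∃ k : α → ℕ, Measurable k ∧ ∀ x, k x ≤ N ∧ ∀ n ≤ N, u n x ≤ u (k x) x := by
  classical
  have hex : ∀ x, ∃ k, k ≤ N ∧ ∀ n ≤ N, u n x ≤ u k x := fun x => by
    obtain ⟨k, hk, hmax⟩ := (Finset.range (N + 1)).exists_max_image (u · x) ⟨0, by simp⟩
    exact ⟨k, Nat.lt_succ_iff.1 (Finset.mem_range.1 hk),
      fun n hn => hmax n (Finset.mem_range.2 (Nat.lt_succ_of_le hn))⟩
  refine ⟨fun x => Nat.find (hex x), measurable_find hex fun k => ?_,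
    fun x => Nat.find_spec (hex x)⟩
  simp only [ofPred_and, ofPred_forall]
  exact (MeasurableSet.const _).inter
    (.iInter fun n => .iInter fun _ => measurableSet_le (hu n) (hu k))

lemma exists_measurable_slopes_tendsto {φ : ℝ → ℝ} (hnn : ∀ t ∈ Ici (0:ℝ), 0 ≤ φ t)
    (hconv : ConvexOn ℝ (Ici 0) φ) (hlsc : LowerSemicontinuousOn φ (Ici 0))
    (hsuper : Tendsto (fun t => φ t / t) atTop atTop) :
    ∃ σ : ℕ → ℝ → ℝ, (∀ N, Measurable (σ N)) ∧ (∀ N, ∃ K, ∀ t, |σ N t| ≤ K) ∧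
      ∀ t ∈ Ici (0:ℝ), (∀ N, 0 ≤ σ N t * t - legendre φ (σ N t)) ∧
        Monotone (fun N => σ N t * t - legendre φ (σ N t)) ∧
        Tendsto (fun N => σ N t * t - legendre φ (σ N t)) atTop (𝓝 (φ t)) := by
  obtain ⟨s, hs0, hs⟩ := exists_dense_slopes hnn hconv hlsc hsuper
  set u : ℕ → ℝ → ℝ := fun n t => s n * t - legendre φ (s n)
  have hu : ∀ n, Measurable (u n) := fun n => by fun_prop
  choose k hk hkmax using exists_measurable_argmax hu
  have hmax : ∀ N t, ∀ n ≤ N, u n t ≤ u (k N t) t := fun N t => (hkmax N t).2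
  refine ⟨fun N t => s (k N t), fun N => measurable_from_nat.comp (hk N),
    fun N => ⟨∑ n ∈ Finset.range (N + 1), |s n|, fun t => Finset.single_le_sum
      (fun n _ => abs_nonneg (s n)) (Finset.mem_range.2 (Nat.lt_succ_of_le (hkmax N t).1))⟩,
    fun t ht => ⟨fun N => ?_, monotone_nat_of_le_succ fun N => ?_, ?_⟩⟩
  · have := hmax N t 0 (Nat.zero_le N)
    simp only [u, hs0, zero_mul, zero_sub] at this
    linarith [legendre_zero_nonpos hnn]
  · exact hmax (N + 1) t _ ((hkmax N t).1.trans N.le_succ)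
  · refine tendsto_order.2 ⟨fun c hc => ?_, fun c hc => Eventually.of_forall fun N => ?_⟩
    · obtain ⟨n, hn⟩ := hs t ht c hc
      exact eventually_atTop.2 ⟨n, fun N hN => hn.trans_le (hmax N t n hN)⟩
    · linarith [mul_sub_le_legendre hnn hsuper (s (k N t)) ht]

lemma MeasureTheory.ofReal_integral_le_lintegral_ofReal {α : Type*} [MeasurableSpace α]
    {μ : Measure α} {f : α → ℝ} (hf : Integrable f μ) :
    ENNReal.ofReal (∫ x, f x ∂μ) ≤ ∫⁻ x, ENNReal.ofReal (f x) ∂μ := by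
  calc ENNReal.ofReal (∫ x, f x ∂μ) ≤ ENNReal.ofReal (∫ x, max (f x) 0 ∂μ) :=
        ENNReal.ofReal_le_ofReal (integral_mono hf hf.pos_part fun x => le_max_left _ _)
    _ = ∫⁻ x, ENNReal.ofReal (max (f x) 0) ∂μ :=
        ofReal_integral_eq_lintegral_ofReal hf.pos_part (ae_of_all _ fun x => le_max_right _ _)
    _ = ∫⁻ x, ENNReal.ofReal (f x) ∂μ := by simp

lemma exists_seq_boundedContinuous_tendsto_ae {X : Type*} [TopologicalSpace X] [NormalSpace X]
    [MeasurableSpace X] [BorelSpace X] (μ : Measure X) [IsFiniteMeasure μ] [μ.WeaklyRegular]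
    {h : X → ℝ} (hh : Measurable h) {K : ℝ} (hK : ∀ x, |h x| ≤ K) :
    ∃ f : ℕ → X →ᵇ ℝ, (∀ n x, |f n x| ≤ K) ∧
      ∀ᵐ x ∂μ, Tendsto (fun n => f n x) atTop (𝓝 (h x)) := by
  have hmem : MemLp h 1 μ := MemLp.of_bound hh.aestronglyMeasurable K (ae_of_all _ hK)
  choose g hg _ using fun n : ℕ => hmem.exists_boundedContinuous_eLpNorm_sub_le one_ne_top
    (ENNReal.inv_ne_zero.2 (natCast_ne_top n))
  have hconv : TendstoInMeasure μ (fun n => ⇑(g n)) atTop h := by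
    refine tendstoInMeasure_of_tendsto_eLpNorm one_ne_zero
      (fun n => (g n).continuous.aestronglyMeasurable) hh.aestronglyMeasurable ?_
    refine tendsto_of_tendsto_of_tendsto_of_le_of_le tendsto_const_nhds
      ENNReal.tendsto_inv_nat_nhds_zero (fun _ => bot_le) fun n => ?_
    rw [eLpNorm_sub_comm]
    exact hg n
  obtain ⟨ns, -, hns⟩ := hconv.exists_seq_tendsto_ae
  set clamp : ℝ → ℝ := fun y => max (-K) (min y K)
  have hclamp : ∀ x, clamp (h x) = h x := fun x => by
    obtain ⟨h1, h2⟩ := abs_le.1 (hK x)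
    simp [clamp, h1, h2]
  have hclamp_cont : Continuous clamp := continuous_const.max (continuous_id.min continuous_const)
  have hbound : ∀ n x, ‖clamp (g (ns n) x)‖ ≤ K := fun n x => by
    have := abs_le.1 (hK x)
    rw [Real.norm_eq_abs, abs_le]
    exact ⟨le_max_left _ _, max_le (by linarith [this.1, this.2]) (min_le_right _ _)⟩
  refine ⟨fun n => .ofNormedAddCommGroup _ (hclamp_cont.comp (g (ns n)).continuous) K (hbound n),
    hbound, ?_⟩
  filter_upwards [hns] with x hx
  have := (hclamp_cont.tendsto (h x)).comp hx
  rwa [hclamp] at this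

noncomputable def dualObjective {X : Type*} [MeasurableSpace X] (φ : ℝ → ℝ) (γ ν : Measure X)
    (f : X → ℝ) : ℝ :=
  ∫ x, f x ∂ν - ∫ x, legendre φ (f x) ∂γ

section DualObjective

variable {X : Type*} [MeasurableSpace X] {φ : ℝ → ℝ} {γ ν : Measure X} [IsFiniteMeasure γ]
  [IsFiniteMeasure ν]

lemma integrable_legendre_comp (hnn : ∀ t ∈ Ici (0:ℝ), 0 ≤ φ t)
    (hsuper : Tendsto (fun t => φ t / t) atTop atTop) {h : X → ℝ} (hh : AEStronglyMeasurable h γ)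
    {K : ℝ} (hK : ∀ x, |h x| ≤ K) : Integrable (fun x => legendre φ (h x)) γ := by
  obtain ⟨C, hC⟩ := exists_bound_legendre hnn hsuper K
  exact (integrable_const C).mono' ((continuous_legendre hnn hsuper).comp_aestronglyMeasurable hh)
    (ae_of_all _ fun x => hC _ (hK x))

lemma integrable_mul_rnDeriv_sub_legendre (hnn : ∀ t ∈ Ici (0:ℝ), 0 ≤ φ t)
    (hsuper : Tendsto (fun t => φ t / t) atTop atTop) {h : X → ℝ} (hh : AEStronglyMeasurable h γ)
    {K : ℝ} (hK : ∀ x, |h x| ≤ K) :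
    Integrable (fun x => h x * (ν.rnDeriv γ x).toReal - legendre φ (h x)) γ :=
  (Measure.integrable_toReal_rnDeriv.bdd_mul hh (ae_of_all _ fun x => hK x)).sub
    (integrable_legendre_comp hnn hsuper hh hK)

lemma dualObjective_eq_integral (hnn : ∀ t ∈ Ici (0:ℝ), 0 ≤ φ t)
    (hsuper : Tendsto (fun t => φ t / t) atTop atTop) (hac : ν ≪ γ) {h : X → ℝ}
    (hh : AEStronglyMeasurable h γ) {K : ℝ} (hK : ∀ x, |h x| ≤ K) :
    dualObjective φ γ ν h = ∫ x, (h x * (ν.rnDeriv γ x).toReal - legendre φ (h x)) ∂γ := by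
  rw [integral_sub (Measure.integrable_toReal_rnDeriv.bdd_mul hh (ae_of_all _ fun x => hK x))
    (integrable_legendre_comp hnn hsuper hh hK), dualObjective, ← integral_rnDeriv_smul hac]
  simp only [smul_eq_mul, mul_comm]

lemma ofReal_dualObjective_le_lintegral (hnn : ∀ t ∈ Ici (0:ℝ), 0 ≤ φ t)
    (hsuper : Tendsto (fun t => φ t / t) atTop atTop) (hac : ν ≪ γ) {h : X → ℝ}
    (hh : AEStronglyMeasurable h γ) {K : ℝ} (hK : ∀ x, |h x| ≤ K) :
    ENNReal.ofReal (dualObjective φ γ ν h) ≤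
      ∫⁻ x, ENNReal.ofReal (φ (ν.rnDeriv γ x).toReal) ∂γ := by
  rw [dualObjective_eq_integral hnn hsuper hac hh hK]
  refine (ofReal_integral_le_lintegral_ofReal
    (integrable_mul_rnDeriv_sub_legendre hnn hsuper hh hK)).trans
    (lintegral_mono fun x => ENNReal.ofReal_le_ofReal ?_)
  linarith [mul_sub_le_legendre hnn hsuper (h x) (t := (ν.rnDeriv γ x).toReal) toReal_nonneg]

variable [TopologicalSpace X] [OpensMeasurableSpace X]

lemma tendsto_dualObjective (hnn : ∀ t ∈ Ici (0:ℝ), 0 ≤ φ t)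
    (hsuper : Tendsto (fun t => φ t / t) atTop atTop) {f : ℕ → X →ᵇ ℝ} {h : X → ℝ} {K : ℝ}
    (hK : ∀ n x, |f n x| ≤ K) (hlim : ∀ᵐ x ∂(γ + ν), Tendsto (fun n => f n x) atTop (𝓝 (h x))) :
    Tendsto (fun n => dualObjective φ γ ν (f n)) atTop (𝓝 (dualObjective φ γ ν h)) := by
  obtain ⟨C, hC⟩ := exists_bound_legendre hnn hsuper K
  have hL := continuous_legendre hnn hsuper
  rw [ae_add_measure_iff] at hlim
  refine Tendsto.sub ?_ ?_
  · exact tendsto_integral_of_dominated_convergence (fun _ => K)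
      (fun n => (f n).continuous.aestronglyMeasurable) (integrable_const K)
      (fun n => ae_of_all _ (hK n)) hlim.2
  · refine tendsto_integral_of_dominated_convergence (fun _ => C)
      (fun n => (hL.comp (f n).continuous).aestronglyMeasurable) (integrable_const C)
      (fun n => ae_of_all _ fun x => hC _ (hK n x)) ?_
    filter_upwards [hlim.1] with x hx using (hL.tendsto _).comp hx

end DualObjective

section DualFormula

variable {X : Type*} [TopologicalSpace X] [TopologicalSpace.PseudoMetrizableSpace X]
  [MeasurableSpace X] [BorelSpace X] {φ : ℝ → ℝ} {γ ν : Measure X} [IsFiniteMeasure γ]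
  [IsFiniteMeasure ν]

lemma ofReal_dualObjective_le_iSup (hnn : ∀ t ∈ Ici (0:ℝ), 0 ≤ φ t)
    (hsuper : Tendsto (fun t => φ t / t) atTop atTop) {h : X → ℝ} (hh : Measurable h) {K : ℝ}
    (hK : ∀ x, |h x| ≤ K) :
    ENNReal.ofReal (dualObjective φ γ ν h) ≤
      ⨆ f : X →ᵇ ℝ, ENNReal.ofReal (dualObjective φ γ ν f) := by
  obtain ⟨f, hfK, hlim⟩ := exists_seq_boundedContinuous_tendsto_ae (γ + ν) hh hK
  exact le_of_tendsto' ((ENNReal.continuous_ofReal.tendsto _).comp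
    (tendsto_dualObjective hnn hsuper hfK hlim))
    fun n => le_iSup (fun f : X →ᵇ ℝ => ENNReal.ofReal (dualObjective φ γ ν f)) (f n)

lemma lintegral_le_iSup_dualObjective (hnn : ∀ t ∈ Ici (0:ℝ), 0 ≤ φ t)
    (hconv : ConvexOn ℝ (Ici 0) φ) (hlsc : LowerSemicontinuousOn φ (Ici 0))
    (hsuper : Tendsto (fun t => φ t / t) atTop atTop) (hac : ν ≪ γ) :
    ∫⁻ x, ENNReal.ofReal (φ (ν.rnDeriv γ x).toReal) ∂γ ≤
      ⨆ f : X →ᵇ ℝ, ENNReal.ofReal (dualObjective φ γ ν f) := by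
  obtain ⟨σ, hσmeas, hσbdd, hσ⟩ := exists_measurable_slopes_tendsto hnn hconv hlsc hsuper
  set ρ : X → ℝ := fun x => (ν.rnDeriv γ x).toReal
  have hρ : Measurable ρ := (Measure.measurable_rnDeriv _ _).ennreal_toReal
  have hρnn : ∀ x, ρ x ∈ Ici 0 := fun x => toReal_nonneg
  have hlim : Tendsto (fun N => ∫⁻ x, ENNReal.ofReal (σ N (ρ x) * ρ x - legendre φ (σ N (ρ x))) ∂γ)
      atTop (𝓝 (∫⁻ x, ENNReal.ofReal (φ (ρ x)) ∂γ)) := by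
    refine lintegral_tendsto_of_tendsto_of_monotone (fun N => ?_)
      (ae_of_all _ fun x => fun M N hMN => ENNReal.ofReal_le_ofReal ((hσ _ (hρnn x)).2.1 hMN))
      (ae_of_all _ fun x => (ENNReal.continuous_ofReal.tendsto _).comp (hσ _ (hρnn x)).2.2)
    have hL := (continuous_legendre hnn hsuper).measurable
    have := (hσmeas N).comp hρ
    fun_prop
  refine le_of_tendsto' hlim fun N => ?_
  obtain ⟨K, hK⟩ := hσbdd N
  have hσρ : Measurable fun x => σ N (ρ x) := (hσmeas N).comp hρ
  rw [← ofReal_integral_eq_lintegral_ofReal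
      (integrable_mul_rnDeriv_sub_legendre hnn hsuper hσρ.aestronglyMeasurable fun x => hK _)
      (ae_of_all _ fun x => (hσ _ (hρnn x)).1 N),
    ← dualObjective_eq_integral hnn hsuper hac hσρ.aestronglyMeasurable fun x => hK _]
  exact ofReal_dualObjective_le_iSup hnn hsuper hσρ fun x => hK _

lemma iSup_dualObjective_eq_top (hnn : ∀ t ∈ Ici (0:ℝ), 0 ≤ φ t)
    (hsuper : Tendsto (fun t => φ t / t) atTop atTop) (hac : ¬ ν ≪ γ) :
    ⨆ f : X →ᵇ ℝ, ENNReal.ofReal (dualObjective φ γ ν f) = ⊤ := by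
  obtain ⟨A, hA, hγA, hνA⟩ : ∃ A, MeasurableSet A ∧ γ A = 0 ∧ ν A ≠ 0 := by
    by_contra! H
    exact hac (Measure.AbsolutelyContinuous.mk H)
  have hνA' : 0 < ν.real A := ENNReal.toReal_pos hνA (measure_ne_top _ _)
  have hvalue : ∀ n : ℕ, dualObjective φ γ ν (A.indicator fun _ => (n : ℝ)) =
      n * ν.real A - γ.real univ * legendre φ 0 := fun n => by
    have hae : (fun x => legendre φ (A.indicator (fun _ => (n : ℝ)) x)) =ᵐ[γ]
        fun _ => legendre φ 0 := by
      filter_upwards [measure_eq_zero_iff_ae_notMem.1 hγA] with x hx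
      rw [indicator_of_notMem hx]
    rw [dualObjective, integral_congr_ae hae, integral_indicator_const _ hA, integral_const,
      smul_eq_mul, smul_eq_mul, mul_comm]
  have hbound : ∀ n : ℕ, ENNReal.ofReal (n * ν.real A - γ.real univ * legendre φ 0) ≤
      ⨆ f : X →ᵇ ℝ, ENNReal.ofReal (dualObjective φ γ ν f) := fun n => by
    rw [← hvalue]
    refine ofReal_dualObjective_le_iSup hnn hsuper (measurable_const.indicator hA) (K := n)
      fun x => ?_
    by_cases hx : x ∈ A <;> simp [hx]
  have htend : Tendsto (fun n : ℕ => n * ν.real A - γ.real univ * legendre φ 0) atTop atTop := by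
    simpa only [sub_eq_add_neg] using
      tendsto_atTop_add_const_right _ _ (tendsto_natCast_atTop_atTop.atTop_mul_const hνA')
  exact top_le_iff.1 (le_of_tendsto' (ENNReal.tendsto_ofReal_atTop.comp htend) hbound)

open Classical in
theorem entropy_eq_iSup_dualObjective (hnn : ∀ t ∈ Ici (0:ℝ), 0 ≤ φ t)
    (hconv : ConvexOn ℝ (Ici 0) φ) (hlsc : LowerSemicontinuousOn φ (Ici 0))
    (hsuper : Tendsto (fun t => φ t / t) atTop atTop) :
    (if ν ≪ γ then ∫⁻ x, ENNReal.ofReal (φ (ν.rnDeriv γ x).toReal) ∂γ else ⊤) =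
      ⨆ f : X →ᵇ ℝ, ENNReal.ofReal (dualObjective φ γ ν f) := by
  split_ifs with hac
  · exact le_antisymm (lintegral_le_iSup_dualObjective hnn hconv hlsc hsuper hac)
      (iSup_le fun f => ofReal_dualObjective_le_lintegral hnn hsuper hac
        f.continuous.aestronglyMeasurable fun x => by simpa using f.norm_coe_le_norm x)
  · exact (iSup_dualObjective_eq_top hnn hsuper hac).symm

open Classical in
theorem lowerSemicontinuous_entropy (hnn : ∀ t ∈ Ici (0:ℝ), 0 ≤ φ t) (hconv : ConvexOn ℝ (Ici 0) φ)
    (hlsc : LowerSemicontinuousOn φ (Ici 0)) (hsuper : Tendsto (fun t => φ t / t) atTop atTop) :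
    LowerSemicontinuous fun μ : ProbabilityMeasure X =>
      if (μ : Measure X) ≪ γ then ∫⁻ x, ENNReal.ofReal (φ ((μ : Measure X).rnDeriv γ x).toReal) ∂γ
      else ⊤ := by
  simp_rw [entropy_eq_iSup_dualObjective hnn hconv hlsc hsuper]
  exact lowerSemicontinuous_iSup fun f => (ENNReal.continuous_ofReal.comp
    ((ProbabilityMeasure.continuous_integral_boundedContinuousFunction f).sub
      continuous_const)).lowerSemicontinuous

end DualFormula

open Classical in
theorem stmt13 (d : ℕ)
    (γ : Measure (EuclideanSpace ℝ (Fin d))) [IsFiniteMeasure γ]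
    (φ : ℝ → ℝ) (hφnn : ∀ s ∈ Ici (0:ℝ), 0 ≤ φ s)
    (hφconv : ConvexOn ℝ (Ici 0) φ) (hφlsc : LowerSemicontinuousOn φ (Ici 0))
    (hφsuper : Tendsto (fun s => φ s / s) atTop atTop)
    (F : ProbabilityMeasure (EuclideanSpace ℝ (Fin d)) → ℝ≥0∞)
    (hF : ∀ μ : ProbabilityMeasure (EuclideanSpace ℝ (Fin d)),
      F μ = if (μ : Measure (EuclideanSpace ℝ (Fin d))) ≪ γ then
        ∫⁻ x, ENNReal.ofReal (φ (((μ : Measure (EuclideanSpace ℝ (Fin d))).rnDeriv γ x).toReal)) ∂γ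
      else ⊤) :
    LowerSemicontinuous F := by
  rw [funext hF]
  exact lowerSemicontinuous_entropy hφnn hφconv hφlsc hφsuper
end
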